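/- arXiv:1402.2955 — 3 statements merged into one kernel-verified Lean document; each statement's English description precedes it below -/
import Mathlib

section
/- For any coideal subalgebra datum (W¹,W²,W³,F), the algebra C(W¹,W²,W³,F) — the subalgebra of H generated by kF, the elements of W¹⊕W², and {[w], [w]~ : w ∈ W³} — is a homogeneous left coideal subalgebra of H; and likewise C_{(χ₁,χ₂)}(W¹,W²,W³,F) is a homogeneous left coideal subalgebra of H_{(χ₁,χ₂)}. -/
open scoped TensorProduct

noncomputable section

/-- A left `H`-comodule algebra structure on the `k`-algebra `A`: the coaction is an algebra
map `A → H ⊗ A` which is coassociative and counital. -/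
structure LeftComodAlg (k : Type*) [Field k] (H : Type*) [Ring H] [HopfAlgebra k H]
    (A : Type*) [Ring A] [Algebra k A] where
  ρ : A →ₐ[k] H ⊗[k] A
  coassoc : ∀ a : A,
    TensorProduct.map (Coalgebra.comul (R := k)) LinearMap.id (ρ a) =
      (TensorProduct.assoc k H H A).symm (TensorProduct.map LinearMap.id ρ.toLinearMap (ρ a))
  counital : ∀ a : A,
    TensorProduct.map (Coalgebra.counit (R := k)) LinearMap.id (ρ a) = (1 : k) ⊗ₜ[k] a

namespace LeftComodAlg

variable {k : Type*} [Field k] {H : Type*} [Ring H] [HopfAlgebra k H]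
  {A : Type*} [Ring A] [Algebra k A]

/-- The coinvariants of a comodule algebra are trivial. -/
def TrivialCoinv (c : LeftComodAlg k H A) : Prop :=
  ∀ a : A, c.ρ a = (1 : H) ⊗ₜ[k] a → ∃ t : k, a = t • (1 : A)

/-- A submodule is costable if the coaction maps it into `H ⊗ I`. -/
def Costable (c : LeftComodAlg k H A) (I : Submodule k A) : Prop :=
  ∀ a ∈ I, c.ρ a ∈ LinearMap.range (LinearMap.lTensor H I.subtype)

/-- `A` is right `H`-simple: it has no nontrivial costable right ideal. -/
def RightHSimple (c : LeftComodAlg k H A) : Prop :=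
  ∀ I : Submodule k A, (∀ a ∈ I, ∀ b : A, a * b ∈ I) → c.Costable I → I = ⊥ ∨ I = ⊤

end LeftComodAlg

/-- A group-like element of a Hopf algebra. -/
def IsGrouplike (k : Type*) [Field k] {H : Type*} [Ring H] [HopfAlgebra k H] (g : H) : Prop :=
  g ≠ 0 ∧ Coalgebra.comul (R := k) g = g ⊗ₜ[k] g ∧ Coalgebra.counit (R := k) g = (1 : k)
/-- The group `G = ℤ/n × ℤ/n` (written additively; `(1,0)` corresponds to `(g,1)` and
`(0,1)` to `(1,g)`). -/
abbrev GGrp (n : ℕ) := ZMod n × ZMod n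

/-- A normalized 2-cocycle on an additively written abelian group `G` with values in `k^×`. -/
structure Cocycle2 (G : Type*) [AddCommGroup G] (k : Type*) [Field k] where
  c : G → G → kˣ
  cocycle : ∀ f f' f'' : G, c f f' * c (f + f') f'' = c f' f'' * c f (f' + f'')
  norm_left : ∀ f : G, c 0 f = 1
  norm_right : ∀ f : G, c f 0 = 1

/-- Two 2-cocycles are cohomologous on the subgroup `F` (their restrictions to `F` differ by
a coboundary), i.e. they give the same class in `H²(F, k^×)`. -/
def CohomologousOn {n : ℕ} {k : Type*} [Field k] (F : AddSubgroup (GGrp n))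
    (ψ ψ' : Cocycle2 (GGrp n) k) : Prop :=
  ∃ c : GGrp n → kˣ, c 0 = 1 ∧
    ∀ f ∈ F, ∀ f' ∈ F, ψ'.c f f' = c f * c f' * (c (f + f'))⁻¹ * ψ.c f f'

/-- A 2-cocycle `ψ` is compatible with the subgroup `F` if
`qⁱ ψ((g,1),f)/ψ(f,(g,1)) = qʲ ψ((1,g⁻¹),f)/ψ(f,(1,g⁻¹))` for every `f = (gⁱ,gʲ) ∈ F`. -/
def CocycleCompatible {n : ℕ} {k : Type*} [Field k] (q : k) (ψ : Cocycle2 (GGrp n) k)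
    (F : AddSubgroup (GGrp n)) : Prop :=
  ∀ f ∈ F,
    q ^ f.1.val * ((ψ.c ((1 : ZMod n), (0 : ZMod n)) f : k) * ((ψ.c f (1, 0) : k))⁻¹) =
      q ^ f.2.val * ((ψ.c ((0 : ZMod n), (-1 : ZMod n)) f : k) * ((ψ.c f (0, -1) : k))⁻¹)

/-- A presentation of the Hopf algebra `H_{(χ₁,χ₂)}` (for trivial characters this is
`H = T_q ⊗ T_{q⁻¹}`): it is generated by the group `G = ℤ/n × ℤ/n` (via `fG`) together with
`x, y`, subject to `xⁿ = 0 = yⁿ`, `xy = χ₂(g,1)·yx`, `f·x = χ₁(f)qⁱ·x·f`,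
`f·y = χ₂(f)qʲ·y·f` for `f = (gⁱ,gʲ)`, with `Δ(x) = x ⊗ 1 + (g,1) ⊗ x`,
`Δ(y) = y ⊗ 1 + (1,g⁻¹) ⊗ y`, `Δ(f) = f ⊗ f`, and with basis `{xⁱyʲf}`. -/
structure HPres (k : Type*) [Field k] (n : ℕ) (q : k) (χ₁ χ₂ : GGrp n → kˣ)
    (H : Type*) [Ring H] [HopfAlgebra k H] where
  x : H
  y : H
  fG : GGrp n → H
  chi_compat : ((χ₁ ((0 : ZMod n), (-1 : ZMod n)) : kˣ) : k) * ((χ₂ ((1 : ZMod n), (0 : ZMod n)) : kˣ) : k) = 1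
  fG_zero : fG 0 = 1
  fG_mul : ∀ f f' : GGrp n, fG f * fG f' = fG (f + f')
  x_pow : x ^ n = 0
  y_pow : y ^ n = 0
  xy : x * y = ((χ₂ ((1 : ZMod n), (0 : ZMod n)) : kˣ) : k) • (y * x)
  fx : ∀ f : GGrp n, fG f * x = (((χ₁ f : kˣ) : k) * q ^ f.1.val) • (x * fG f)
  fy : ∀ f : GGrp n, fG f * y = (((χ₂ f : kˣ) : k) * q ^ f.2.val) • (y * fG f)
  comul_f : ∀ f : GGrp n, Coalgebra.comul (R := k) (fG f) = fG f ⊗ₜ[k] fG f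
  comul_x : Coalgebra.comul (R := k) x = x ⊗ₜ[k] 1 + fG (1, 0) ⊗ₜ[k] x
  comul_y : Coalgebra.comul (R := k) y = y ⊗ₜ[k] 1 + fG (0, -1) ⊗ₜ[k] y
  counit_f : ∀ f : GGrp n, Coalgebra.counit (R := k) (fG f) = (1 : k)
  counit_x : Coalgebra.counit (R := k) x = (0 : k)
  counit_y : Coalgebra.counit (R := k) y = (0 : k)
  bas : Module.Basis (Fin n × Fin n × GGrp n) k H
  bas_eq : ∀ p : Fin n × Fin n × GGrp n,
    bas p = x ^ (p.1 : ℕ) * y ^ (p.2.1 : ℕ) * fG p.2.2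

namespace HPres

variable {k : Type*} [Field k] {n : ℕ} {q : k} {χ₁ χ₂ : GGrp n → kˣ}
  {H : Type*} [Ring H] [HopfAlgebra k H]

/-- Projection of `H` onto the line `k·x`, relative to the standard basis. -/
def px [NeZero n] (P : HPres k n q χ₁ χ₂ H) : H →ₗ[k] H :=
  (P.bas.coord ((1 : Fin n), (0 : Fin n), (0 : GGrp n))).smulRight
    (P.bas ((1 : Fin n), (0 : Fin n), (0 : GGrp n)))

/-- Projection of `H` onto the line `k·y`, relative to the standard basis. -/
def py [NeZero n] (P : HPres k n q χ₁ χ₂ H) : H →ₗ[k] H :=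
  (P.bas.coord ((0 : Fin n), (1 : Fin n), (0 : GGrp n))).smulRight
    (P.bas ((0 : Fin n), (1 : Fin n), (0 : GGrp n)))

/-- The line `V₁ = k·x`. -/
def V1 (P : HPres k n q χ₁ χ₂ H) : Submodule k H := Submodule.span k {P.x}

/-- The line `V₂ = k·y`. -/
def V2 (P : HPres k n q χ₁ χ₂ H) : Submodule k H := Submodule.span k {P.y}

/-- The plane `V₁ ⊕ V₂ = k·x ⊕ k·y`. -/
def V12 (P : HPres k n q χ₁ χ₂ H) : Submodule k H := Submodule.span k {P.x, P.y}

/-- The action of `f = (gⁱ,gʲ) ∈ G` on `V₁ ⊕ V₂`: `x ↦ χ₁(f)qⁱ x`, `y ↦ χ₂(f)qʲ y`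
(extended by the basis projections). -/
def actG [NeZero n] (P : HPres k n q χ₁ χ₂ H) (f : GGrp n) : H →ₗ[k] H :=
  (((χ₁ f : kˣ) : k) * q ^ f.1.val) • P.px + (((χ₂ f : kˣ) : k) * q ^ f.2.val) • P.py

/-- For `w = (v₁,v₂) ∈ V₁ ⊕ V₂`, the element `[w] = v₁ + v₂·(g,g)`. -/
def br [NeZero n] (P : HPres k n q χ₁ χ₂ H) (w : H) : H :=
  P.px w + P.py w * P.fG (1, 1)

/-- For `w = (v₁,v₂) ∈ V₁ ⊕ V₂`, the element `[w]~ = v₂ + v₁·(g⁻¹,g⁻¹)`. -/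
def tbr [NeZero n] (P : HPres k n q χ₁ χ₂ H) (w : H) : H :=
  P.py w + P.px w * P.fG (-1, -1)

/-- The degree-`m` projection of `H` relative to the coradical grading, for which
`xⁱyʲf` is homogeneous of degree `i + j`. -/
def grProj (P : HPres k n q χ₁ χ₂ H) (m : ℕ) : H →ₗ[k] H :=
  P.bas.constr k (fun p : Fin n × Fin n × GGrp n =>
    if (p.1 : ℕ) + (p.2.1 : ℕ) = m then P.bas p else 0)

/-- Conjugation by the group-like element `fG f`: `h ↦ fG f * h * fG (-f)`. -/
def conj (P : HPres k n q χ₁ χ₂ H) (f : GGrp n) : H →ₗ[k] H :=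
  LinearMap.mulLeft k (P.fG f) ∘ₗ LinearMap.mulRight k (P.fG (-f))

end HPres

/-- A subalgebra `C ⊆ H` is a left coideal subalgebra if `Δ(C) ⊆ H ⊗ C`. -/
def IsLeftCoidealSubalgebra {k : Type*} [Field k] {H : Type*} [Ring H] [HopfAlgebra k H]
    (C : Subalgebra k H) : Prop :=
  ∀ c ∈ C, Coalgebra.comul (R := k) c ∈
    LinearMap.range (LinearMap.lTensor H (Subalgebra.toSubmodule C).subtype)

/-- A subalgebra of `H` is homogeneous (for the coradical grading) if it is stable under all
the homogeneous projections. -/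
def IsHomogeneousSubalgebra {k : Type*} [Field k] {n : ℕ} {q : k} {χ₁ χ₂ : GGrp n → kˣ}
    {H : Type*} [Ring H] [HopfAlgebra k H] (P : HPres k n q χ₁ χ₂ H)
    (C : Subalgebra k H) : Prop :=
  ∀ c ∈ C, ∀ m : ℕ, P.grProj m c ∈ C

/-- A coideal subalgebra datum `(W¹, W², W³, F)` for a presented Hopf algebra
`H_{(χ₁,χ₂)}`. -/
structure CoidealDatum {k : Type*} [Field k] {n : ℕ} [NeZero n] {q : k}
    {χ₁ χ₂ : GGrp n → kˣ} {H : Type*} [Ring H] [HopfAlgebra k H]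
    (P : HPres k n q χ₁ χ₂ H) where
  W1 : Submodule k H
  W2 : Submodule k H
  W3 : Submodule k H
  F : AddSubgroup (GGrp n)
  hW1 : W1 ≤ P.V1
  hW2 : W2 ≤ P.V2
  hW3 : W3 ≤ P.V12
  hcap1 : (W1 ⊔ W2 ⊔ W3) ⊓ P.V1 = W1
  hcap2 : (W1 ⊔ W2 ⊔ W3) ⊓ P.V2 = W2
  hW3V1 : W3 ⊓ P.V1 = ⊥
  hW3V2 : W3 ⊓ P.V2 = ⊥
  indep1 : W1 ⊓ (W2 ⊔ W3) = ⊥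
  indep2 : W2 ⊓ (W1 ⊔ W3) = ⊥
  indep3 : W3 ⊓ (W1 ⊔ W2) = ⊥
  hF1 : ∀ f ∈ F, ∀ v ∈ W1, P.actG f v ∈ W1
  hF2 : ∀ f ∈ F, ∀ v ∈ W2, P.actG f v ∈ W2
  hF3 : ∀ f ∈ F, ∀ v ∈ W3, P.actG f v ∈ W3
  hgg : W3 ≠ ⊥ → ((1 : ZMod n), (1 : ZMod n)) ∈ F

/-- The coideal subalgebra `C(W¹,W²,W³,F)` attached to a coideal subalgebra datum: the
subalgebra generated by `kF`, the elements of `W¹ ⊕ W²`, and `{[w], [w]~ : w ∈ W³}`. -/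
def CoidealDatum.C {k : Type*} [Field k] {n : ℕ} [NeZero n] {q : k}
    {χ₁ χ₂ : GGrp n → kˣ} {H : Type*} [Ring H] [HopfAlgebra k H]
    {P : HPres k n q χ₁ χ₂ H} (d : CoidealDatum P) : Subalgebra k H :=
  Algebra.adjoin k
    ((P.fG '' (d.F : Set (GGrp n))) ∪ (d.W1 : Set H) ∪ (d.W2 : Set H) ∪
      (P.br '' (d.W3 : Set H)) ∪ (P.tbr '' (d.W3 : Set H)))

/-!
Both properties pass from generators to the subalgebra they generate: `Δ` is an algebra
map and `H ⊗ C` is a subalgebra of `H ⊗ H`, while a product of monomials `xⁱyʲf` is a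
scalar multiple of a monomial, so the spans of the monomials of fixed degree grade `H` as
an algebra. The generators are the group-likes of `F`, the skew-primitive elements of
`W¹ ⊕ W²` (`Δu = u ⊗ 1 + g ⊗ u`), and `[w] = v₁ + v₂(g,g)`,
`[w]~ = v₂ + v₁(g⁻¹,g⁻¹)`, for which `Δ[w] = v₁ ⊗ 1 + v₂(g,g) ⊗ (g,g) + (g,1) ⊗ [w]`
and similarly for `[w]~`; the right tensor factors lie in `C` because `(g,g) ∈ F` as soon
as `W³ ≠ 0`. All generators are homogeneous of degree `0` or `1`.
-/

open TensorProduct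

section QCommute

variable {R A : Type*} [CommSemiring R] [Semiring A] [Algebra R A] {a b : A} {c : R}

theorem mul_pow_eq_smul_pow_mul (h : a * b = c • (b * a)) (i : ℕ) :
    a * b ^ i = c ^ i • (b ^ i * a) := by
  induction i with
  | zero => simp
  | succ i ih =>
    rw [pow_succ, ← mul_assoc, ih, smul_mul_assoc, mul_assoc, h, mul_smul_comm, smul_smul,
      ← mul_assoc, ← pow_succ, pow_succ c]

theorem pow_mul_pow_eq_smul (h : a * b = c • (b * a)) (i j : ℕ) :
    a ^ j * b ^ i = (c ^ i) ^ j • (b ^ i * a ^ j) := by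
  induction j with
  | zero => simp
  | succ j ih =>
    rw [pow_succ', mul_assoc, ih, mul_smul_comm, ← mul_assoc, mul_pow_eq_smul_pow_mul h,
      smul_mul_assoc, smul_smul, mul_assoc, ← pow_succ]

end QCommute

section LeftCoideal

variable {R : Type*} [CommSemiring R] {A : Type*} [Semiring A] [Algebra R A]

def Subalgebra.lTensorRange (C : Subalgebra R A) : Subalgebra R (A ⊗[R] A) :=
  (Algebra.TensorProduct.map (AlgHom.id R A) C.val).range

theorem Subalgebra.tmul_mem_lTensorRange {C : Subalgebra R A} (h : A) {c : A} (hc : c ∈ C) :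
    h ⊗ₜ[R] c ∈ C.lTensorRange :=
  ⟨h ⊗ₜ ⟨c, hc⟩, rfl⟩

end LeftCoideal

section SkewPrimitive

variable (R : Type*) [CommSemiring R] {A : Type*} [Semiring A] [Bialgebra R A]

def IsSkewPrimitive (g u : A) : Prop :=
  Coalgebra.comul (R := R) u = u ⊗ₜ[R] 1 + g ⊗ₜ[R] u

variable {R} {g u : A}

theorem IsSkewPrimitive.smul (hu : IsSkewPrimitive R g u) (a : R) :
    IsSkewPrimitive R g (a • u) := by
  rw [IsSkewPrimitive, map_smul, hu, smul_add, smul_tmul', tmul_smul]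

theorem IsSkewPrimitive.comul_add_mul {v gu gv : A} (hu : IsSkewPrimitive R gu u)
    (hv : IsSkewPrimitive R gv v) (hg : Coalgebra.comul (R := R) g = g ⊗ₜ[R] g)
    (hgv : gv * g = gu) :
    Coalgebra.comul (R := R) (u + v * g) =
      u ⊗ₜ[R] 1 + (v * g) ⊗ₜ[R] g + gu ⊗ₜ[R] (u + v * g) := by
  rw [map_add, Bialgebra.comul_mul, hu, hv, hg, add_mul, Algebra.TensorProduct.tmul_mul_tmul,
    Algebra.TensorProduct.tmul_mul_tmul, one_mul, hgv, tmul_add]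
  abel

theorem IsSkewPrimitive.comul_mem_lTensorRange {C : Subalgebra R A} {g u : A}
    (hu : IsSkewPrimitive R g u) (huC : u ∈ C) :
    Coalgebra.comul (R := R) u ∈ C.lTensorRange := by
  rw [hu]
  exact add_mem (C.tmul_mem_lTensorRange u (one_mem C)) (C.tmul_mem_lTensorRange g huC)

end SkewPrimitive

/-- Membership in `C.lTensorRange` unfolds to membership in the range of
`LinearMap.lTensor H (Subalgebra.toSubmodule C).subtype`, as in `IsLeftCoidealSubalgebra`. -/
theorem isLeftCoidealSubalgebra_adjoin {k : Type*} [Field k] {H : Type*} [Ring H]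
    [HopfAlgebra k H] {S : Set H}
    (hS : ∀ s ∈ S, Coalgebra.comul (R := k) s ∈ (Algebra.adjoin k S).lTensorRange) :
    IsLeftCoidealSubalgebra (Algebra.adjoin k S) :=
  Algebra.adjoin_le (S := (Algebra.adjoin k S).lTensorRange.comap (Bialgebra.comulAlgHom k H)) hS

theorem Module.Basis.smulRight_coord_apply_self {ι R M : Type*} [CommSemiring R]
    [AddCommMonoid M] [Module R M] (b : Module.Basis ι R M) (i : ι) :
    (b.coord i).smulRight (b i) (b i) = b i := by
  simp

theorem Module.Basis.smulRight_coord_apply_of_ne {ι R M : Type*} [CommSemiring R]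
    [AddCommMonoid M] [Module R M] (b : Module.Basis ι R M) {i j : ι} (h : j ≠ i) :
    (b.coord i).smulRight (b i) (b j) = 0 := by
  simp [Finsupp.single_eq_of_ne' h]

namespace HPres

variable {k : Type*} [Field k] {n : ℕ} {q : k} {χ₁ χ₂ : GGrp n → kˣ}
  {H : Type*} [Ring H] [HopfAlgebra k H] (P : HPres k n q χ₁ χ₂ H)

theorem isSkewPrimitive_of_mem_V1 {u : H} (hu : u ∈ P.V1) :
    IsSkewPrimitive k (P.fG (1, 0)) u := by
  obtain ⟨a, rfl⟩ := Submodule.mem_span_singleton.1 hu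
  exact IsSkewPrimitive.smul P.comul_x a

theorem isSkewPrimitive_of_mem_V2 {v : H} (hv : v ∈ P.V2) :
    IsSkewPrimitive k (P.fG (0, -1)) v := by
  obtain ⟨a, rfl⟩ := Submodule.mem_span_singleton.1 hv
  exact IsSkewPrimitive.smul P.comul_y a

theorem exists_monomial_mul (i j i' j' : ℕ) (f f' : GGrp n) :
    ∃ s : k, (P.x ^ i * P.y ^ j * P.fG f) * (P.x ^ i' * P.y ^ j' * P.fG f') =
      s • (P.x ^ (i + i') * P.y ^ (j + j') * P.fG (f + f')) := by
  have hyx : P.y * P.x = (((χ₂ (1, 0))⁻¹ : kˣ) : k) • (P.x * P.y) := by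
    rw [P.xy, smul_smul, Units.inv_mul, one_smul]
  obtain ⟨c₁, hx⟩ : ∃ c : k, P.fG f * P.x ^ i' = c • (P.x ^ i' * P.fG f) :=
    ⟨_, mul_pow_eq_smul_pow_mul (P.fx f) i'⟩
  obtain ⟨c₂, hy⟩ : ∃ c : k, P.fG f * P.y ^ j' = c • (P.y ^ j' * P.fG f) :=
    ⟨_, mul_pow_eq_smul_pow_mul (P.fy f) j'⟩
  obtain ⟨c₃, hyx⟩ : ∃ c : k, P.y ^ j * P.x ^ i' = c • (P.x ^ i' * P.y ^ j) :=
    ⟨_, pow_mul_pow_eq_smul hyx i' j⟩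
  refine ⟨c₁ * c₂ * c₃, ?_⟩
  calc (P.x ^ i * P.y ^ j * P.fG f) * (P.x ^ i' * P.y ^ j' * P.fG f')
      = P.x ^ i * P.y ^ j * (P.fG f * P.x ^ i') * P.y ^ j' * P.fG f' := by
        simp only [mul_assoc]
    _ = c₁ • (P.x ^ i * P.y ^ j * P.x ^ i' * (P.fG f * P.y ^ j') * P.fG f') := by
        rw [hx]; simp only [mul_smul_comm, smul_mul_assoc, mul_assoc]
    _ = (c₁ * c₂) • (P.x ^ i * (P.y ^ j * P.x ^ i') * P.y ^ j' * (P.fG f * P.fG f')) := by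
        rw [hy]; simp only [mul_smul_comm, smul_mul_assoc, mul_assoc, smul_smul]
    _ = (c₁ * c₂ * c₃) • (P.x ^ (i + i') * P.y ^ (j + j') * P.fG (f + f')) := by
        rw [hyx, P.fG_mul, pow_add, pow_add]
        simp only [mul_smul_comm, smul_mul_assoc, mul_assoc, smul_smul]

def homogeneousSubmodule (d : ℕ) : Submodule k H :=
  Submodule.span k {h | ∃ (i j : ℕ) (f : GGrp n), i + j = d ∧ h = P.x ^ i * P.y ^ j * P.fG f}

section

variable {P}

theorem monomial_mem_homogeneousSubmodule {i j d : ℕ} (hd : i + j = d) (f : GGrp n) :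
    P.x ^ i * P.y ^ j * P.fG f ∈ P.homogeneousSubmodule d :=
  Submodule.subset_span ⟨i, j, f, hd, rfl⟩

theorem fG_mem_homogeneousSubmodule_zero (f : GGrp n) : P.fG f ∈ P.homogeneousSubmodule 0 := by
  simpa using monomial_mem_homogeneousSubmodule (P := P) (i := 0) (j := 0) rfl f

theorem V1_le_homogeneousSubmodule_one : P.V1 ≤ P.homogeneousSubmodule 1 := by
  rw [V1, Submodule.span_le, Set.singleton_subset_iff]
  simpa [P.fG_zero] using monomial_mem_homogeneousSubmodule (P := P) (i := 1) (j := 0) rfl 0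

theorem V2_le_homogeneousSubmodule_one : P.V2 ≤ P.homogeneousSubmodule 1 := by
  rw [V2, Submodule.span_le, Set.singleton_subset_iff]
  simpa [P.fG_zero] using monomial_mem_homogeneousSubmodule (P := P) (i := 0) (j := 1) rfl 0

theorem mul_mem_homogeneousSubmodule {a b : H} {d e : ℕ} (ha : a ∈ P.homogeneousSubmodule d)
    (hb : b ∈ P.homogeneousSubmodule e) : a * b ∈ P.homogeneousSubmodule (d + e) := by
  refine Submodule.mul_le.1 ?_ a ha b hb
  rw [homogeneousSubmodule, homogeneousSubmodule, Submodule.span_mul_span, Submodule.span_le]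
  rintro _ ⟨_, ⟨i, j, f, rfl, rfl⟩, _, ⟨i', j', f', rfl, rfl⟩, rfl⟩
  obtain ⟨s, hs⟩ := P.exists_monomial_mul i j i' j' f f'
  show _ * _ ∈ _
  rw [hs]
  exact Submodule.smul_mem _ _ (monomial_mem_homogeneousSubmodule (by omega) _)

theorem grProj_monomial (m i j : ℕ) (f : GGrp n) :
    P.grProj m (P.x ^ i * P.y ^ j * P.fG f) =
      if i + j = m then P.x ^ i * P.y ^ j * P.fG f else 0 := by
  by_cases hij : i < n ∧ j < n
  · have hb : P.x ^ i * P.y ^ j * P.fG f = P.bas (⟨i, hij.1⟩, ⟨j, hij.2⟩, f) := by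
      rw [P.bas_eq]
    rw [hb, grProj, Module.Basis.constr_basis]
  · have h0 : P.x ^ i * P.y ^ j * P.fG f = 0 := by
      rcases not_and_or.1 hij with h | h
      · rw [← Nat.add_sub_cancel' (not_lt.1 h), pow_add, P.x_pow]; simp
      · rw [← Nat.add_sub_cancel' (not_lt.1 h), pow_add, P.y_pow]; simp
    simp [h0]

theorem grProj_of_mem_homogeneousSubmodule {m : ℕ} {v : H}
    (hv : v ∈ P.homogeneousSubmodule m) : P.grProj m v = v := by
  refine LinearMap.eqOn_span' (g := LinearMap.id) ?_ hv
  rintro _ ⟨i, j, f, rfl, rfl⟩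
  simp [grProj_monomial]

theorem grProj_of_mem_homogeneousSubmodule_of_ne {m d : ℕ} {v : H}
    (hv : v ∈ P.homogeneousSubmodule d) (hdm : d ≠ m) : P.grProj m v = 0 := by
  refine LinearMap.eqOn_span' (g := 0) ?_ hv
  rintro _ ⟨i, j, f, rfl, rfl⟩
  simp [grProj_monomial, hdm]

theorem isHomogeneousSubalgebra_adjoin {S : Set H}
    (hS : ∀ s ∈ S, ∃ d, s ∈ P.homogeneousSubmodule d) :
    IsHomogeneousSubalgebra P (Algebra.adjoin k S) := by
  have hclosure : ∀ s ∈ Submonoid.closure S, ∃ d, s ∈ P.homogeneousSubmodule d := by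
    intro s hs
    induction hs using Submonoid.closure_induction with
    | mem s hs => exact hS s hs
    | one => exact ⟨0, by simpa [P.fG_zero] using fG_mem_homogeneousSubmodule_zero (P := P) 0⟩
    | mul a b _ _ ha hb =>
      obtain ⟨d, ha⟩ := ha
      obtain ⟨e, hb⟩ := hb
      exact ⟨d + e, mul_mem_homogeneousSubmodule ha hb⟩
  intro c hc m
  rw [← Subalgebra.mem_toSubmodule, Algebra.adjoin_eq_span] at hc ⊢
  induction hc using Submodule.span_induction with
  | mem s hs =>
    obtain ⟨d, hd⟩ := hclosure s hs
    rcases eq_or_ne d m with rfl | hdm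
    · rw [grProj_of_mem_homogeneousSubmodule hd]
      exact Submodule.subset_span hs
    · rw [grProj_of_mem_homogeneousSubmodule_of_ne hd hdm]
      exact zero_mem _
  | zero => simp
  | add a b _ _ ha hb => simpa using add_mem ha hb
  | smul r a _ ha => simpa using Submodule.smul_mem _ r ha

end

section

variable [NeZero n]

theorem bas_x (hn : 2 ≤ n) : P.bas (1, 0, 0) = P.x := by
  simp [P.bas_eq, P.fG_zero, Nat.mod_eq_of_lt hn]

theorem bas_y (hn : 2 ≤ n) : P.bas (0, 1, 0) = P.y := by
  simp [P.bas_eq, P.fG_zero, Nat.mod_eq_of_lt hn]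

theorem px_mem_V1_and_py_mem_V2 (hn : 2 ≤ n) {w : H} (hw : w ∈ P.V12) :
    P.px w ∈ P.V1 ∧ P.py w ∈ P.V2 := by
  have hne : ((0 : Fin n), (1 : Fin n), (0 : GGrp n)) ≠ (1, 0, 0) := by
    simp [Fin.ext_iff, Nat.mod_eq_of_lt hn]
  obtain ⟨a, b, rfl⟩ := Submodule.mem_span_pair.1 hw
  rw [V1, V2, ← bas_x P hn, ← bas_y P hn]
  constructor
  · simpa only [px, map_add, map_smul, Module.Basis.smulRight_coord_apply_self,
      Module.Basis.smulRight_coord_apply_of_ne _ hne, smul_zero, add_zero]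
      using Submodule.smul_mem _ a (Submodule.mem_span_singleton_self _)
  · simpa only [py, map_add, map_smul, Module.Basis.smulRight_coord_apply_self,
      Module.Basis.smulRight_coord_apply_of_ne _ hne.symm, smul_zero, zero_add]
      using Submodule.smul_mem _ b (Submodule.mem_span_singleton_self _)

variable {P}

theorem br_mem_homogeneousSubmodule_one (hn : 2 ≤ n) {w : H} (hw : w ∈ P.V12) :
    P.br w ∈ P.homogeneousSubmodule 1 := by
  obtain ⟨hu, hv⟩ := P.px_mem_V1_and_py_mem_V2 hn hw
  exact add_mem (V1_le_homogeneousSubmodule_one hu)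
    (mul_mem_homogeneousSubmodule (d := 1) (e := 0) (V2_le_homogeneousSubmodule_one hv)
      (fG_mem_homogeneousSubmodule_zero (1, 1)))

theorem tbr_mem_homogeneousSubmodule_one (hn : 2 ≤ n) {w : H} (hw : w ∈ P.V12) :
    P.tbr w ∈ P.homogeneousSubmodule 1 := by
  obtain ⟨hu, hv⟩ := P.px_mem_V1_and_py_mem_V2 hn hw
  exact add_mem (V2_le_homogeneousSubmodule_one hv)
    (mul_mem_homogeneousSubmodule (d := 1) (e := 0) (V1_le_homogeneousSubmodule_one hu)
      (fG_mem_homogeneousSubmodule_zero (-1, -1)))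

end

end HPres

namespace CoidealDatum

variable {k : Type*} [Field k] {n : ℕ} [NeZero n] {q : k} {χ₁ χ₂ : GGrp n → kˣ}
  {H : Type*} [Ring H] [HopfAlgebra k H] {P : HPres k n q χ₁ χ₂ H} (d : CoidealDatum P)

theorem fG_mem_C {f : GGrp n} (hf : f ∈ d.F) : P.fG f ∈ d.C :=
  Algebra.subset_adjoin (Or.inl <| Or.inl <| Or.inl <| Or.inl ⟨f, hf, rfl⟩)

theorem one_one_mem_F {w : H} (hw : w ∈ d.W3) (hw0 : w ≠ 0) :
    ((1 : ZMod n), (1 : ZMod n)) ∈ d.F :=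
  d.hgg ((Submodule.ne_bot_iff _).2 ⟨w, hw, hw0⟩)

theorem comul_br_mem_lTensorRange (hn : 2 ≤ n) {w : H} (hw : w ∈ d.W3) :
    Coalgebra.comul (R := k) (P.br w) ∈ d.C.lTensorRange := by
  rcases eq_or_ne w 0 with rfl | hw0
  · simp [HPres.br]
  have hbr : P.br w ∈ d.C := Algebra.subset_adjoin (Or.inl <| Or.inr ⟨w, hw, rfl⟩)
  obtain ⟨hu, hv⟩ := P.px_mem_V1_and_py_mem_V2 hn (d.hW3 hw)
  have hg : P.fG (0, -1) * P.fG (1, 1) = P.fG (1, 0) := by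
    rw [P.fG_mul]; congr 1; ext <;> simp
  rw [HPres.br, (P.isSkewPrimitive_of_mem_V1 hu).comul_add_mul (P.isSkewPrimitive_of_mem_V2 hv)
    (P.comul_f _) hg]
  exact add_mem (add_mem (d.C.tmul_mem_lTensorRange _ (one_mem _))
    (d.C.tmul_mem_lTensorRange _ (d.fG_mem_C (d.one_one_mem_F hw hw0))))
    (d.C.tmul_mem_lTensorRange _ hbr)

theorem comul_tbr_mem_lTensorRange (hn : 2 ≤ n) {w : H} (hw : w ∈ d.W3) :
    Coalgebra.comul (R := k) (P.tbr w) ∈ d.C.lTensorRange := by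
  rcases eq_or_ne w 0 with rfl | hw0
  · simp [HPres.tbr]
  have htbr : P.tbr w ∈ d.C := Algebra.subset_adjoin (Or.inr ⟨w, hw, rfl⟩)
  obtain ⟨hu, hv⟩ := P.px_mem_V1_and_py_mem_V2 hn (d.hW3 hw)
  have hg : P.fG (1, 0) * P.fG (-1, -1) = P.fG (0, -1) := by
    rw [P.fG_mul]; congr 1; ext <;> simp
  rw [HPres.tbr, (P.isSkewPrimitive_of_mem_V2 hv).comul_add_mul (P.isSkewPrimitive_of_mem_V1 hu)
    (P.comul_f _) hg]
  exact add_mem (add_mem (d.C.tmul_mem_lTensorRange _ (one_mem _))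
    (d.C.tmul_mem_lTensorRange _ (d.fG_mem_C (neg_mem (d.one_one_mem_F hw hw0)))))
    (d.C.tmul_mem_lTensorRange _ htbr)

end CoidealDatum

theorem coidealDatum_C_isLeftCoideal_general
    {k : Type*} [Field k]
    {n : ℕ} [NeZero n] (hn : 2 ≤ n) {q : k}
    {χ₁ χ₂ : GGrp n → kˣ} {H : Type*} [Ring H] [HopfAlgebra k H]
    (P : HPres k n q χ₁ χ₂ H) (d : CoidealDatum P) :
    IsLeftCoidealSubalgebra d.C ∧ IsHomogeneousSubalgebra P d.C := by
  refine ⟨isLeftCoidealSubalgebra_adjoin ?_, HPres.isHomogeneousSubalgebra_adjoin ?_⟩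
  · rintro s hs
    have hsC : s ∈ d.C := Algebra.subset_adjoin hs
    rcases hs with (((⟨f, hf, rfl⟩ | hs) | hs) | ⟨w, hw, rfl⟩) | ⟨w, hw, rfl⟩
    · rw [P.comul_f]
      exact d.C.tmul_mem_lTensorRange _ hsC
    · exact (P.isSkewPrimitive_of_mem_V1 (d.hW1 hs)).comul_mem_lTensorRange hsC
    · exact (P.isSkewPrimitive_of_mem_V2 (d.hW2 hs)).comul_mem_lTensorRange hsC
    · exact d.comul_br_mem_lTensorRange hn hw
    · exact d.comul_tbr_mem_lTensorRange hn hw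
  · rintro s ((((⟨f, -, rfl⟩ | hs) | hs) | ⟨w, hw, rfl⟩) | ⟨w, hw, rfl⟩)
    · exact ⟨0, HPres.fG_mem_homogeneousSubmodule_zero f⟩
    · exact ⟨1, HPres.V1_le_homogeneousSubmodule_one (d.hW1 hs)⟩
    · exact ⟨1, HPres.V2_le_homogeneousSubmodule_one (d.hW2 hs)⟩
    · exact ⟨1, HPres.br_mem_homogeneousSubmodule_one hn (d.hW3 hw)⟩
    · exact ⟨1, HPres.tbr_mem_homogeneousSubmodule_one hn (d.hW3 hw)⟩

/-- For any coideal subalgebra datum `(W¹,W²,W³,F)`, the algebra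
`C(W¹,W²,W³,F)` — the subalgebra of `H_{(χ₁,χ₂)}` generated by `kF`, the elements of
`W¹ ⊕ W²`, and `{[w], [w]~ : w ∈ W³}` — is a homogeneous left coideal subalgebra of
`H_{(χ₁,χ₂)}` (for trivial characters this is the statement for `H` itself). -/
theorem coidealDatum_C_isLeftCoideal
    {k : Type*} [Field k] [IsAlgClosed k] [CharZero k]
    {n : ℕ} [NeZero n] (hn : 2 ≤ n) {q : k} (hq : IsPrimitiveRoot q n)
    {χ₁ χ₂ : GGrp n → kˣ} {H : Type*} [Ring H] [HopfAlgebra k H]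
    (P : HPres k n q χ₁ χ₂ H) (d : CoidealDatum P) :
    IsLeftCoidealSubalgebra d.C ∧ IsHomogeneousSubalgebra P d.C :=
  coidealDatum_C_isLeftCoideal_general hn P d
end
end

section
/- For any subgroup F ⊆ G with (g,g) ∈ F, any 2-cocycle ψ ∈ Z²(F,k^×) compatible with F, and any ξ ∈ k^×, μ ∈ k, the algebra L(ξ,μ,F,ψ) is a right H-simple left H-comodule algebra with trivial coinvariants. -/
open scoped TensorProduct

noncomputable section

section ComodPres

variable (k : Type*) [Field k] (n : ℕ) (q : k)
  (H : Type*) [Ring H] [HopfAlgebra k H]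

/-- A presentation of the twisted group algebra `k_ψF` as a left `H`-comodule algebra (the
comodule algebra with basis `{e_f : f ∈ F}`, multiplication `e_f e_{f'} = ψ(f,f') e_{ff'}` and
coaction `e_f ↦ f ⊗ e_f`), relative to the given coaction `co`. -/
structure KPsiPres (P : HPres k n q 1 1 H) (F : AddSubgroup (GGrp n))
    (ψ : Cocycle2 (GGrp n) k)
    {A : Type*} [Ring A] [Algebra k A] (co : LeftComodAlg k H A) where
  e : F → A
  e_zero : e 0 = 1
  e_mul : ∀ f f' : F, e f * e f' = ((ψ.c ↑f ↑f' : kˣ) : k) • e (f + f')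
  co_e : ∀ f : F, co.ρ (e f) = P.fG ↑f ⊗ₜ[k] e f
  li : LinearIndependent k e
  span : ⊤ ≤ Submodule.span k (Set.range e)

/-- A presentation of the left `H`-comodule algebra `K₀₁(a,F,ψ)` (generated by `z` and the
`e_f`), relative to the given coaction `co`. -/
structure K01Pres (P : HPres k n q 1 1 H) (a : k) (F : AddSubgroup (GGrp n))
    (ψ : Cocycle2 (GGrp n) k)
    {A : Type*} [Ring A] [Algebra k A] (co : LeftComodAlg k H A) where
  z : A
  e : F → A
  e_zero : e 0 = 1
  z_pow : z ^ n = a • (1 : A)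
  e_mul : ∀ f f' : F, e f * e f' = ((ψ.c ↑f ↑f' : kˣ) : k) • e (f + f')
  ez : ∀ f : F, e f * z = q ^ (f : GGrp n).1.val • (z * e f)
  co_e : ∀ f : F, co.ρ (e f) = P.fG ↑f ⊗ₜ[k] e f
  co_z : co.ρ z = P.x ⊗ₜ[k] (1 : A) + P.fG (1, 0) ⊗ₜ[k] z
  li : LinearIndependent k (fun p : F × Fin n => e p.1 * z ^ (p.2 : ℕ))
  span : ⊤ ≤ Submodule.span k (Set.range fun p : F × Fin n => e p.1 * z ^ (p.2 : ℕ))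

/-- A presentation of the left `H`-comodule algebra `K₁₀(b,F,ψ)` (generated by `u` and the
`e_f`), relative to the given coaction `co`. -/
structure K10Pres (P : HPres k n q 1 1 H) (b : k) (F : AddSubgroup (GGrp n))
    (ψ : Cocycle2 (GGrp n) k)
    {A : Type*} [Ring A] [Algebra k A] (co : LeftComodAlg k H A) where
  u : A
  e : F → A
  e_zero : e 0 = 1
  u_pow : u ^ n = b • (1 : A)
  e_mul : ∀ f f' : F, e f * e f' = ((ψ.c ↑f ↑f' : kˣ) : k) • e (f + f')
  eu : ∀ f : F, e f * u = q ^ (f : GGrp n).2.val • (u * e f)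
  co_e : ∀ f : F, co.ρ (e f) = P.fG ↑f ⊗ₜ[k] e f
  co_u : co.ρ u = P.y ⊗ₜ[k] (1 : A) + P.fG (0, -1) ⊗ₜ[k] u
  li : LinearIndependent k (fun p : F × Fin n => e p.1 * u ^ (p.2 : ℕ))
  span : ⊤ ≤ Submodule.span k (Set.range fun p : F × Fin n => e p.1 * u ^ (p.2 : ℕ))

/-- A presentation of the left `H`-comodule algebra `K₁₁(a,b,ξ,F,ψ)` (generated by `z`, `u`
and the `e_f`, with `zu - uz = ξ e_{(g,g⁻¹)}`), relative to the given coaction `co`. -/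
structure K11Pres (P : HPres k n q 1 1 H) (a b ξ : k) (F : AddSubgroup (GGrp n))
    (ψ : Cocycle2 (GGrp n) k)
    {A : Type*} [Ring A] [Algebra k A] (co : LeftComodAlg k H A) where
  z : A
  u : A
  e : F → A
  e_zero : e 0 = 1
  z_pow : z ^ n = a • (1 : A)
  u_pow : u ^ n = b • (1 : A)
  zu_mem : ∀ h : ((1 : ZMod n), (-1 : ZMod n)) ∈ F,
    z * u - u * z = ξ • e ⟨((1 : ZMod n), (-1 : ZMod n)), h⟩
  zu_not_mem : ((1 : ZMod n), (-1 : ZMod n)) ∉ F → z * u - u * z = 0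
  e_mul : ∀ f f' : F, e f * e f' = ((ψ.c ↑f ↑f' : kˣ) : k) • e (f + f')
  ez : ∀ f : F, e f * z = q ^ (f : GGrp n).1.val • (z * e f)
  eu : ∀ f : F, e f * u = q ^ (f : GGrp n).2.val • (u * e f)
  co_e : ∀ f : F, co.ρ (e f) = P.fG ↑f ⊗ₜ[k] e f
  co_z : co.ρ z = P.x ⊗ₜ[k] (1 : A) + P.fG (1, 0) ⊗ₜ[k] z
  co_u : co.ρ u = P.y ⊗ₜ[k] (1 : A) + P.fG (0, -1) ⊗ₜ[k] u
  li : LinearIndependent k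
    (fun p : F × Fin n × Fin n => e p.1 * z ^ (p.2.1 : ℕ) * u ^ (p.2.2 : ℕ))
  span : ⊤ ≤ Submodule.span k
    (Set.range fun p : F × Fin n × Fin n => e p.1 * z ^ (p.2.1 : ℕ) * u ^ (p.2.2 : ℕ))

/-- A presentation of the left `H`-comodule algebra `L(ξ,μ,F,ψ)` (generated by `w` and the
`e_f`, with `λ(w) = ξ·x ⊗ 1 + y(g,g) ⊗ e_{(g,g)} + (g,1) ⊗ w`), relative to the given
coaction `co`; here `(g,g) ∈ F`. -/
structure LPres (P : HPres k n q 1 1 H) (F : AddSubgroup (GGrp n))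
    (hF : ((1 : ZMod n), (1 : ZMod n)) ∈ F) (ψ : Cocycle2 (GGrp n) k) (ξ μ : k)
    {A : Type*} [Ring A] [Algebra k A] (co : LeftComodAlg k H A) where
  w : A
  e : F → A
  e_zero : e 0 = 1
  w_pow : w ^ n = μ • (1 : A)
  e_mul : ∀ f f' : F, e f * e f' = ((ψ.c ↑f ↑f' : kˣ) : k) • e (f + f')
  ew : ∀ f : F, e f * w = q ^ (f : GGrp n).1.val • (w * e f)
  co_e : ∀ f : F, co.ρ (e f) = P.fG ↑f ⊗ₜ[k] e f
  co_w : co.ρ w = ξ • (P.x ⊗ₜ[k] (1 : A)) +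
    (P.y * P.fG (1, 1)) ⊗ₜ[k] e ⟨((1 : ZMod n), (1 : ZMod n)), hF⟩ + P.fG (1, 0) ⊗ₜ[k] w
  li : LinearIndependent k (fun p : F × Fin n => e p.1 * w ^ (p.2 : ℕ))
  span : ⊤ ≤ Submodule.span k (Set.range fun p : F × Fin n => e p.1 * w ^ (p.2 : ℕ))

end ComodPres

/-!
Slicing the coaction with a functional on `H` maps every costable subspace into itself. We slice
with the coefficient of `xʲ φ`. Modulo terms containing `y`, `λ(w) ≡ ξ x ⊗ 1 + (g,1) ⊗ w`, and
`(g,1)` `q`-commutes with `x`; so the coefficient of `xᵐ f` in `λ(e_f wᵐ)` is `(ξ q^{f₁})ᵐ e_f`,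
while all coefficients of `xʲ` with `j > m` vanish. Hence if `a ≠ 0` has top `w`-degree `m` in the
basis `{e_f wᵐ}` and `e_f wᵐ` occurs in it, slicing `λ(a)` at `xᵐ f` gives a nonzero multiple of
`e_f`. In a costable right ideal this produces the unit `e_f`, so the ideal is everything; for a
coinvariant `a`, slicing `1 ⊗ a` forces `m = 0` and `f = 0`, i.e. `a ∈ k·1`.
-/

section SliceLeft

variable {R : Type*} [CommRing R] {H : Type*} [Ring H] [Algebra R H]
  {A : Type*} [Ring A] [Algebra R A]

def sliceLeft (ℓ : H →ₗ[R] R) : H ⊗[R] A →ₗ[R] A :=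
  (TensorProduct.lid R A).toLinearMap ∘ₗ LinearMap.rTensor A ℓ

@[simp]
lemma sliceLeft_tmul (ℓ : H →ₗ[R] R) (h : H) (a : A) :
    sliceLeft ℓ (h ⊗ₜ[R] a) = ℓ h • a := by
  simp [sliceLeft]

@[simp]
lemma sliceLeft_zero : sliceLeft (0 : H →ₗ[R] R) = (0 : H ⊗[R] A →ₗ[R] A) := by
  simp [sliceLeft]

@[simp]
lemma sliceLeft_smul (c : R) (ℓ : H →ₗ[R] R) :
    sliceLeft (c • ℓ) = (c • sliceLeft ℓ : H ⊗[R] A →ₗ[R] A) := by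
  simp [sliceLeft, LinearMap.comp_smul]

lemma sliceLeft_mul_tmul (ℓ : H →ₗ[R] R) (T : H ⊗[R] A) (h : H) (a : A) :
    sliceLeft ℓ (T * h ⊗ₜ[R] a) = sliceLeft (ℓ ∘ₗ LinearMap.mulRight R h) T * a := by
  induction T using TensorProduct.induction_on with
  | zero => simp
  | tmul h' a' => simp
  | add T T' hT hT' => simp only [add_mul, map_add, hT, hT']

end SliceLeft

lemma LeftComodAlg.Costable.sliceLeft_mem {k : Type*} [Field k] {H : Type*} [Ring H]
    [HopfAlgebra k H] {A : Type*} [Ring A] [Algebra k A] {c : LeftComodAlg k H A}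
    {I : Submodule k A} (hI : c.Costable I) (ℓ : H →ₗ[k] k) {a : A} (ha : a ∈ I) :
    sliceLeft ℓ (c.ρ a) ∈ I := by
  obtain ⟨t, ht⟩ := hI a ha
  rw [← ht]
  clear ht
  induction t using TensorProduct.induction_on with
  | zero => simp
  | tmul h i => simpa using I.smul_mem _ i.2
  | add u v hu hv => simpa only [map_add] using I.add_mem hu hv

namespace HPres

variable {k : Type*} [Field k] {n : ℕ} {q : k} {χ₁ χ₂ : GGrp n → kˣ}
  {H : Type*} [Ring H] [HopfAlgebra k H]

/-- The coefficient of `xʲ φ` in the basis `{xⁱyʲf}`; it is zero when `n ≤ j`. -/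
def xCoeff (P : HPres k n q χ₁ χ₂ H) (j : ℕ) (φ : GGrp n) : H →ₗ[k] k :=
  if h : j < n then P.bas.coord (⟨j, h⟩, ⟨0, by omega⟩, φ) else 0

lemma xCoeff_monomial (P : HPres k n q χ₁ χ₂ H) (j a b : ℕ) (φ ψ : GGrp n) :
    P.xCoeff j φ (P.x ^ a * P.y ^ b * P.fG ψ) =
      if j < n ∧ j = a ∧ b = 0 ∧ φ = ψ then 1 else 0 := by
  by_cases hab : a < n ∧ b < n
  · have hbas := P.bas_eq (⟨a, hab.1⟩, ⟨b, hab.2⟩, ψ)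
    simp only at hbas
    rw [← hbas, xCoeff]
    split_ifs with hj hc hc
    · simp [hc.2.1, hc.2.2.1, hc.2.2.2]
    · rw [Module.Basis.coord_apply, Module.Basis.repr_self, Finsupp.single_apply, if_neg]
      rintro ⟨⟩
      exact hc ⟨hj, rfl, rfl, rfl⟩
    · exact absurd hc.1 hj
    · rfl
  · have hzero : P.x ^ a * P.y ^ b * P.fG ψ = 0 := by
      rcases not_and_or.mp hab with ha | hb
      · rw [pow_eq_zero_of_le (not_lt.mp ha) P.x_pow, zero_mul, zero_mul]
      · rw [pow_eq_zero_of_le (not_lt.mp hb) P.y_pow, mul_zero, zero_mul]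
    rw [hzero, map_zero, if_neg]
    omega

lemma xCoeff_fG (P : HPres k n q χ₁ χ₂ H) (j : ℕ) (φ ψ : GGrp n) :
    P.xCoeff j φ (P.fG ψ) = if j < n ∧ j = 0 ∧ φ = ψ then 1 else 0 := by
  simpa using P.xCoeff_monomial j 0 0 φ ψ

lemma dual_ext (P : HPres k n q χ₁ χ₂ H) {M : Type*} [AddCommGroup M] [Module k M]
    {ℓ ℓ' : H →ₗ[k] M}
    (h : ∀ a b ψ, ℓ (P.x ^ a * P.y ^ b * P.fG ψ) = ℓ' (P.x ^ a * P.y ^ b * P.fG ψ)) :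
    ℓ = ℓ' :=
  P.bas.ext fun p => by rw [P.bas_eq]; exact h _ _ _

variable (P : HPres k n q 1 1 H)

lemma monomial_mul_x (a b : ℕ) (ψ : GGrp n) :
    P.x ^ a * P.y ^ b * P.fG ψ * P.x = q ^ ψ.1.val • (P.x ^ (a + 1) * P.y ^ b * P.fG ψ) := by
  have hfx : P.fG ψ * P.x = q ^ ψ.1.val • (P.x * P.fG ψ) := by simpa using P.fx ψ
  have hxy : Commute P.x P.y := by simpa [Commute, SemiconjBy] using P.xy
  rw [mul_assoc, hfx, mul_smul_comm, ← mul_assoc, mul_assoc (P.x ^ a),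
    ← (hxy.pow_right b).eq, ← mul_assoc, ← pow_succ]

lemma monomial_mul_y (a b : ℕ) (ψ : GGrp n) :
    P.x ^ a * P.y ^ b * P.fG ψ * P.y = q ^ ψ.2.val • (P.x ^ a * P.y ^ (b + 1) * P.fG ψ) := by
  have hfy : P.fG ψ * P.y = q ^ ψ.2.val • (P.y * P.fG ψ) := by simpa using P.fy ψ
  rw [mul_assoc, hfy, mul_smul_comm, ← mul_assoc, mul_assoc (P.x ^ a), ← pow_succ]

lemma monomial_mul_fG (a b : ℕ) (ψ c : GGrp n) :
    P.x ^ a * P.y ^ b * P.fG ψ * P.fG c = P.x ^ a * P.y ^ b * P.fG (ψ + c) := by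
  rw [mul_assoc, P.fG_mul]

lemma xCoeff_comp_mulRight_fG (j : ℕ) (φ c : GGrp n) :
    P.xCoeff j φ ∘ₗ LinearMap.mulRight k (P.fG c) = P.xCoeff j (φ - c) :=
  P.dual_ext fun a b ψ => by
    simp only [LinearMap.comp_apply, LinearMap.mulRight_apply, monomial_mul_fG,
      xCoeff_monomial, sub_eq_iff_eq_add]

lemma xCoeff_comp_mulRight_y (j : ℕ) (φ : GGrp n) :
    P.xCoeff j φ ∘ₗ LinearMap.mulRight k P.y = 0 :=
  P.dual_ext fun a b ψ => by
    simp [monomial_mul_y, xCoeff_monomial]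

lemma xCoeff_succ_comp_mulRight_x {j : ℕ} (hj : j + 1 < n) (φ : GGrp n) :
    P.xCoeff (j + 1) φ ∘ₗ LinearMap.mulRight k P.x = q ^ φ.1.val • P.xCoeff j φ :=
  P.dual_ext fun a b ψ => by
    simp only [LinearMap.comp_apply, LinearMap.mulRight_apply, LinearMap.smul_apply,
      monomial_mul_x, map_smul, xCoeff_monomial, hj, (Nat.lt_of_succ_lt hj), true_and,
      Nat.add_right_cancel_iff, smul_eq_mul]
    split_ifs with h
    · rw [h.2.2]
    · simp

lemma xCoeff_comp_mulRight_y_mul_fG (j : ℕ) (φ c : GGrp n) :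
    P.xCoeff j φ ∘ₗ LinearMap.mulRight k (P.y * P.fG c) = 0 := by
  rw [LinearMap.mulRight_mul, ← LinearMap.comp_assoc, xCoeff_comp_mulRight_fG,
    xCoeff_comp_mulRight_y]

end HPres

namespace LPres

variable {k : Type*} [Field k] {n : ℕ} {q : k} {H : Type*} [Ring H] [HopfAlgebra k H]
  {P : HPres k n q 1 1 H} {F : AddSubgroup (GGrp n)} {hF : ((1 : ZMod n), (1 : ZMod n)) ∈ F}
  {ψ : Cocycle2 (GGrp n) k} {ξ μ : k} {A : Type*} [Ring A] [Algebra k A]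
  {co : LeftComodAlg k H A} (LP : LPres k n q H P F hF ψ ξ μ co)

lemma sliceLeft_xCoeff_succ_mul_ρ_w {j : ℕ} (hj : j + 1 < n) (φ : GGrp n) (T : H ⊗[k] A) :
    sliceLeft (P.xCoeff (j + 1) φ) (T * co.ρ LP.w) =
      (ξ * q ^ φ.1.val) • sliceLeft (P.xCoeff j φ) T +
        sliceLeft (P.xCoeff (j + 1) (φ - (1, 0))) T * LP.w := by
  rw [LP.co_w, mul_add, mul_add, mul_smul_comm, map_add, map_add, map_smul,
    sliceLeft_mul_tmul, sliceLeft_mul_tmul, sliceLeft_mul_tmul,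
    P.xCoeff_succ_comp_mulRight_x hj, P.xCoeff_comp_mulRight_y_mul_fG, P.xCoeff_comp_mulRight_fG]
  simp [mul_smul]

lemma sliceLeft_xCoeff_ρ_e_mul_w_pow_of_lt (f : F) {m j : ℕ} (hmj : m < j) (φ : GGrp n) :
    sliceLeft (P.xCoeff j φ) (co.ρ (LP.e f * LP.w ^ m)) = 0 := by
  induction m generalizing j φ with
  | zero => simp [LP.co_e, P.xCoeff_fG, hmj.ne']
  | succ m ih =>
    obtain ⟨j, rfl⟩ : ∃ j', j = j' + 1 := ⟨j - 1, by omega⟩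
    by_cases hj : j + 1 < n
    · rw [pow_succ, ← mul_assoc, map_mul, LP.sliceLeft_xCoeff_succ_mul_ρ_w hj,
        ih (by omega), ih (by omega)]
      simp
    · simp [HPres.xCoeff, hj]

lemma sliceLeft_xCoeff_ρ_e_mul_w_pow (f : F) {m : ℕ} (hm : m < n) (φ : GGrp n) :
    sliceLeft (P.xCoeff m φ) (co.ρ (LP.e f * LP.w ^ m)) =
      if φ = f then (ξ * q ^ (f : GGrp n).1.val) ^ m • LP.e f else 0 := by
  induction m generalizing φ with
  | zero => simp [LP.co_e, P.xCoeff_fG, hm]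
  | succ m ih =>
    rw [pow_succ, ← mul_assoc, map_mul, LP.sliceLeft_xCoeff_succ_mul_ρ_w hm,
      ih (by omega), LP.sliceLeft_xCoeff_ρ_e_mul_w_pow_of_lt f (Nat.lt_succ_self m)]
    split_ifs with h
    · rw [h, smul_smul, zero_mul, add_zero, pow_succ']
    · simp

def basis : Module.Basis (F × Fin n) k A := Module.Basis.mk LP.li LP.span

lemma basis_apply (p : F × Fin n) : LP.basis p = LP.e p.1 * LP.w ^ (p.2 : ℕ) :=
  Module.Basis.mk_apply _ _ _

lemma e_ne_zero [NeZero n] (f : F) : LP.e f ≠ 0 := by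
  simpa using LP.li.ne_zero (f, 0)

lemma exists_sliceLeft_xCoeff_eq_smul_e (hξ : ξ ≠ 0) (hq : q ≠ 0) {a : A} (ha : a ≠ 0) :
    ∃ (j : ℕ) (f : F) (c : k), c ≠ 0 ∧ sliceLeft (P.xCoeff j f) (co.ρ a) = c • LP.e f := by
  set l := LP.basis.repr a
  obtain ⟨⟨f, m⟩, hmem, hmax⟩ := l.support.exists_max_image (fun p => (p.2 : ℕ))
    (Finsupp.support_nonempty_iff.mpr (by simpa [l] using ha))
  refine ⟨m, f, l (f, m) * (ξ * q ^ (f : GGrp n).1.val) ^ (m : ℕ),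
    mul_ne_zero (Finsupp.mem_support_iff.mp hmem)
      (pow_ne_zero _ (mul_ne_zero hξ (pow_ne_zero _ hq))), ?_⟩
  let D := sliceLeft (P.xCoeff m f) ∘ₗ co.ρ.toLinearMap
  have hD : D a = l.sum fun p c => c • D (LP.basis p) := by
    conv_lhs => rw [← LP.basis.linearCombination_repr a]
    rw [Finsupp.apply_linearCombination, Finsupp.linearCombination_apply]
    rfl
  have hDB : ∀ p : F × Fin n,
      D (LP.basis p) = sliceLeft (P.xCoeff m f) (co.ρ (LP.e p.1 * LP.w ^ (p.2 : ℕ))) := by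
    intro p
    rw [basis_apply]
    rfl
  change D a = _
  rw [hD, Finsupp.sum, Finset.sum_eq_single (f, m)]
  · rw [hDB, LP.sliceLeft_xCoeff_ρ_e_mul_w_pow f m.isLt, if_pos rfl, mul_smul]
  · rintro ⟨f', m'⟩ hp hne
    rw [hDB]
    rcases (hmax _ hp).lt_or_eq with hlt | heq
    · rw [LP.sliceLeft_xCoeff_ρ_e_mul_w_pow_of_lt f' hlt, smul_zero]
    · obtain rfl := Fin.ext heq.symm
      have hff' : (f : GGrp n) ≠ f' := fun h => hne (by rw [Subtype.ext h])
      rw [LP.sliceLeft_xCoeff_ρ_e_mul_w_pow f' m.isLt, if_neg hff', smul_zero]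
  · intro h
    exact absurd hmem h

lemma eq_top_of_e_mem {I : Submodule k A} (hI : ∀ a ∈ I, ∀ b : A, a * b ∈ I) {f : F}
    (hf : LP.e f ∈ I) : I = ⊤ := by
  have h1 : (1 : A) ∈ I := by
    have := hI _ hf (LP.e (-f))
    rw [LP.e_mul, add_neg_cancel, LP.e_zero] at this
    exact (I.smul_mem_iff (Units.ne_zero _)).mp this
  exact Submodule.eq_top_iff'.mpr fun b => by simpa using hI 1 h1 b

theorem rightHSimple (LP : LPres k n q H P F hF ψ ξ μ co) (hξ : ξ ≠ 0) (hq : q ≠ 0) :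
    co.RightHSimple := by
  intro I hI hco
  refine or_iff_not_imp_left.mpr fun hbot => ?_
  obtain ⟨a, haI, ha⟩ := Submodule.exists_mem_ne_zero_of_ne_bot hbot
  obtain ⟨_, f, c, hc, hjf⟩ := LP.exists_sliceLeft_xCoeff_eq_smul_e hξ hq ha
  have hcf : c • LP.e f ∈ I := hjf ▸ hco.sliceLeft_mem _ haI
  exact LP.eq_top_of_e_mem hI ((I.smul_mem_iff hc).mp hcf)

theorem trivialCoinv [NeZero n] (LP : LPres k n q H P F hF ψ ξ μ co) (hξ : ξ ≠ 0)
    (hq : q ≠ 0) : co.TrivialCoinv := by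
  intro a ha
  rcases eq_or_ne a 0 with rfl | ha0
  · exact ⟨0, by simp⟩
  obtain ⟨j, f, c, hc, hjf⟩ := LP.exists_sliceLeft_xCoeff_eq_smul_e hξ hq ha0
  rw [ha, sliceLeft_tmul, ← P.fG_zero, P.xCoeff_fG] at hjf
  split_ifs at hjf with h
  · obtain rfl : f = 0 := Subtype.ext h.2.2
    exact ⟨c, by rwa [one_smul, LP.e_zero] at hjf⟩
  · rw [zero_smul, eq_comm, smul_eq_zero] at hjf
    exact absurd (hjf.resolve_left hc) (LP.e_ne_zero f)

end LPres

theorem LPres_rightHSimple_trivialCoinv_general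
    {k : Type*} [Field k]
    {n : ℕ} (hn : 2 ≤ n) {q : k} (hq : IsPrimitiveRoot q n)
    {H : Type*} [Ring H] [HopfAlgebra k H] (P : HPres k n q 1 1 H)
    (F : AddSubgroup (GGrp n)) (hF : ((1 : ZMod n), (1 : ZMod n)) ∈ F)
    (ψ : Cocycle2 (GGrp n) k)
    (ξ μ : k) (hξ : ξ ≠ 0)
    {A : Type*} [Ring A] [Algebra k A] (co : LeftComodAlg k H A)
    (LP : LPres k n q H P F hF ψ ξ μ co) :
    co.RightHSimple ∧ co.TrivialCoinv := by
  have : NeZero n := ⟨by omega⟩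
  have hq0 : q ≠ 0 := hq.ne_zero (NeZero.ne n)
  exact ⟨LP.rightHSimple hξ hq0, LP.trivialCoinv hξ hq0⟩

/-- For any subgroup `F ⊆ G` with `(g,g) ∈ F`, any 2-cocycle `ψ`
compatible with `F`, and any `ξ ∈ k^×`, `μ ∈ k`, the algebra `L(ξ,μ,F,ψ)` is a right
`H`-simple left `H`-comodule algebra with trivial coinvariants (`H = T_q ⊗ T_{q⁻¹}`). -/
theorem LPres_rightHSimple_trivialCoinv
    {k : Type*} [Field k] [IsAlgClosed k] [CharZero k]
    {n : ℕ} (hn : 2 ≤ n) {q : k} (hq : IsPrimitiveRoot q n)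
    {H : Type*} [Ring H] [HopfAlgebra k H] (P : HPres k n q 1 1 H)
    (F : AddSubgroup (GGrp n)) (hF : ((1 : ZMod n), (1 : ZMod n)) ∈ F)
    (ψ : Cocycle2 (GGrp n) k) (hcomp : CocycleCompatible q ψ F)
    (ξ μ : k) (hξ : ξ ≠ 0)
    {A : Type*} [Ring A] [Algebra k A] (co : LeftComodAlg k H A)
    (LP : LPres k n q H P F hF ψ ξ μ co) :
    co.RightHSimple ∧ co.TrivialCoinv :=
  LPres_rightHSimple_trivialCoinv_general hn hq P F hF ψ ξ μ hξ co LP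
end
end

section
/- For any a, b, ξ ∈ k (with ξ = 0 unless (g,g^{-1}) ∈ F), any subgroup F ⊆ G and any 2-cocycle ψ ∈ Z²(F,k^×), the algebra K₁₁(a,b,ξ,F,ψ) is a right H-simple left H-comodule algebra with trivial coinvariants. -/
open scoped TensorProduct

noncomputable section

/-!
The coaction of a basis vector `e_f zⁱ uʲ` of `K₁₁` is a nonzero multiple of `xⁱ yʲ f ⊗ e_f`
plus terms `x^(i-t) y^(j-s) f' ⊗ e_f zᵗ uˢ` with `(t, s) ≠ (0, 0)`. So if `e_{f₀} z^{i₀} u^{j₀}`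
has the lexicographically largest `(i, j)` in the support of `v`, the `x^{i₀} y^{j₀} f₀`-coordinate
of the `H`-factor of `λ(v)` is a nonzero multiple of `e_{f₀}`. In a costable right ideal this
puts the right-invertible `e_{f₀}` into the ideal; for a coinvariant `v`, where
`λ(v) = 1 ⊗ v`, it forces every basis vector in the support of `v` to be `1`.
-/

section Slice

variable {R M N : Type*} [CommSemiring R] [AddCommMonoid M] [Module R M]
  [AddCommMonoid N] [Module R N]

def leftSlice (φ : M →ₗ[R] R) : M ⊗[R] N →ₗ[R] N :=
  TensorProduct.lid R N ∘ₗ φ.rTensor N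

@[simp]
lemma leftSlice_tmul (φ : M →ₗ[R] R) (m : M) (x : N) : leftSlice φ (m ⊗ₜ x) = φ m • x := by
  simp [leftSlice]

lemma leftSlice_mem_of_mem_range_lTensor {I : Submodule R N} (φ : M →ₗ[R] R) {t : M ⊗[R] N}
    (ht : t ∈ LinearMap.range (I.subtype.lTensor M)) : leftSlice φ t ∈ I := by
  obtain ⟨s, rfl⟩ := ht
  induction s using TensorProduct.induction_on with
  | zero => simp
  | tmul m x => simpa using I.smul_mem (φ m) x.2
  | add s s' hs hs' => simpa only [map_add] using I.add_mem hs hs'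

end Slice

namespace HPres

variable {k : Type*} [Field k] {n : ℕ} {q : k} {H : Type*} [Ring H] [HopfAlgebra k H]
  (P : HPres k n q 1 1 H)

lemma fG_mul_x (f : GGrp n) : P.fG f * P.x = q ^ f.1.val • (P.x * P.fG f) := by
  simpa using P.fx f

lemma fG_mul_y (f : GGrp n) : P.fG f * P.y = q ^ f.2.val • (P.y * P.fG f) := by
  simpa using P.fy f

lemma bas_coord_monomial {i j : ℕ} (hi : i < n) (hj : j < n) (g : GGrp n)
    (h : Fin n × Fin n × GGrp n) :
    P.bas.coord h (P.x ^ i * P.y ^ j * P.fG g) =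
      if i = h.1 ∧ j = h.2.1 ∧ g = h.2.2 then 1 else 0 := by
  rw [← P.bas_eq (⟨i, hi⟩, ⟨j, hj⟩, g), Module.Basis.coord_apply, Module.Basis.repr_self,
    Finsupp.single_apply]
  simp only [Prod.ext_iff, Fin.ext_iff]

lemma bas_coord_one [NeZero n] (h : Fin n × Fin n × GGrp n) :
    P.bas.coord h 1 = if h = 0 then 1 else 0 := by
  have hone : (1 : H) = P.x ^ 0 * P.y ^ 0 * P.fG 0 := by simp [P.fG_zero]
  rw [hone, P.bas_coord_monomial (Nat.pos_of_neZero n) (Nat.pos_of_neZero n)]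
  simp only [Prod.ext_iff, Fin.ext_iff, @eq_comm ℕ 0, @eq_comm (GGrp n) 0]
  rfl

end HPres

namespace K11Pres

open Finset

variable {k : Type*} [Field k] {n : ℕ} {q : k} {H : Type*} [Ring H] [HopfAlgebra k H]
  {P : HPres k n q 1 1 H} {a b ξ : k} {F : AddSubgroup (GGrp n)} {ψ : Cocycle2 (GGrp n) k}
  {A : Type*} [Ring A] [Algebra k A] {co : LeftComodAlg k H A}
  (KP : K11Pres k n q H P a b ξ F ψ co)

def basis : Module.Basis (F × Fin n × Fin n) k A := .mk KP.li KP.span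

lemma basis_apply (p : F × Fin n × Fin n) :
    KP.basis p = KP.e p.1 * KP.z ^ (p.2.1 : ℕ) * KP.u ^ (p.2.2 : ℕ) :=
  Module.Basis.mk_apply _ _ _

lemma coaction_e_mul_z_pow (hq : q ≠ 0) (f : F) (i : ℕ) :
    ∃ γ : ℕ → k, γ 0 ≠ 0 ∧
      co.ρ (KP.e f * KP.z ^ i) =
        ∑ t ∈ range (i + 1), γ t •
          ((P.x ^ (i - t) * P.fG ((f : GGrp n) + ((t : ZMod n), (0 : ZMod n)))) ⊗ₜ[k]
            (KP.e f * KP.z ^ t)) := by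
  induction i with
  | zero => exact ⟨fun _ => 1, one_ne_zero, by simp [KP.co_e f, Prod.mk_zero_zero]⟩
  | succ i ih =>
    obtain ⟨γ, hγ0, hγ⟩ := ih
    refine ⟨fun t =>
      (if t ≤ i then γ t * q ^ ((f : GGrp n) + ((t : ZMod n), (0 : ZMod n))).1.val else 0)
        + (if t = 0 then 0 else γ (t - 1)),
      by simpa using mul_ne_zero hγ0 (pow_ne_zero (f : GGrp n).1.val hq), ?_⟩
    rw [pow_succ, ← mul_assoc, map_mul, hγ, KP.co_z, mul_add, sum_mul, sum_mul]
    simp only [add_smul, sum_add_distrib]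
    congr 1
    · conv_rhs => rw [sum_range_succ]
      rw [if_neg (by omega), zero_smul, add_zero]
      refine sum_congr rfl fun t ht => ?_
      rw [if_pos (mem_range_succ_iff.mp ht), smul_mul_assoc, Algebra.TensorProduct.tmul_mul_tmul,
        mul_one, mul_assoc, P.fG_mul_x, mul_smul_comm, ← TensorProduct.smul_tmul', smul_smul,
        ← mul_assoc, ← pow_succ, Nat.sub_add_comm (mem_range_succ_iff.mp ht)]
    · conv_rhs => rw [sum_range_succ']
      simp only [Nat.succ_ne_zero, if_false, Nat.add_sub_cancel, reduceIte, zero_smul, add_zero]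
      refine sum_congr rfl fun t _ => ?_
      rw [smul_mul_assoc, Algebra.TensorProduct.tmul_mul_tmul, mul_assoc, P.fG_mul, mul_assoc,
        ← pow_succ, Nat.add_sub_add_right, add_assoc]
      congr 4
      simp

lemma coaction_e_mul_z_pow_mul_u_pow (hq : q ≠ 0) (f : F) (i j : ℕ) :
    ∃ γ : ℕ → ℕ → k, γ 0 0 ≠ 0 ∧
      co.ρ (KP.e f * KP.z ^ i * KP.u ^ j) =
        ∑ t ∈ range (i + 1), ∑ s ∈ range (j + 1), γ t s •
          ((P.x ^ (i - t) * P.y ^ (j - s) * P.fG ((f : GGrp n) + ((t : ZMod n), -(s : ZMod n))))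
            ⊗ₜ[k] (KP.e f * KP.z ^ t * KP.u ^ s)) := by
  induction j with
  | zero =>
    obtain ⟨γ, hγ0, hγ⟩ := KP.coaction_e_mul_z_pow hq f i
    exact ⟨fun t _ => γ t, hγ0, by simp [hγ]⟩
  | succ j ih =>
    obtain ⟨γ, hγ0, hγ⟩ := ih
    refine ⟨fun t s =>
      (if s ≤ j then γ t s * q ^ ((f : GGrp n) + ((t : ZMod n), -(s : ZMod n))).2.val else 0)
        + (if s = 0 then 0 else γ t (s - 1)),
      by simpa using mul_ne_zero hγ0 (pow_ne_zero ((f : GGrp n) + 0).2.val hq), ?_⟩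
    rw [pow_succ, ← mul_assoc, map_mul, hγ, KP.co_u, mul_add]
    simp only [sum_mul, add_smul, sum_add_distrib]
    congr 1
    · refine sum_congr rfl fun t _ => ?_
      conv_rhs => rw [sum_range_succ]
      rw [if_neg (by omega), zero_smul, add_zero]
      refine sum_congr rfl fun s hs => ?_
      rw [if_pos (mem_range_succ_iff.mp hs), smul_mul_assoc, Algebra.TensorProduct.tmul_mul_tmul,
        mul_one, mul_assoc (P.x ^ (i - t) * P.y ^ (j - s)), P.fG_mul_y, mul_smul_comm,
        ← TensorProduct.smul_tmul', smul_smul, ← mul_assoc, mul_assoc (P.x ^ (i - t)),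
        ← pow_succ, Nat.sub_add_comm (mem_range_succ_iff.mp hs)]
    · refine sum_congr rfl fun t _ => ?_
      conv_rhs => rw [sum_range_succ']
      simp only [Nat.succ_ne_zero, if_false, Nat.add_sub_cancel, reduceIte, zero_smul, add_zero]
      refine sum_congr rfl fun s _ => ?_
      rw [smul_mul_assoc, Algebra.TensorProduct.tmul_mul_tmul,
        mul_assoc (P.x ^ (i - t) * P.y ^ (j - s)), P.fG_mul, mul_assoc (KP.e f * KP.z ^ t),
        ← pow_succ, Nat.add_sub_add_right, add_assoc]
      congr 4
      simp [add_comm]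

def bidegree (p : F × Fin n × Fin n) : Fin n ×ₗ Fin n := toLex (p.2.1, p.2.2)

lemma leftSlice_coaction_basis (hq : q ≠ 0) (p : F × Fin n × Fin n) :
    ∃ γ : k, γ ≠ 0 ∧ ∀ p' : F × Fin n × Fin n, bidegree p ≤ bidegree p' →
      leftSlice (P.bas.coord (p'.2.1, p'.2.2, p'.1)) (co.ρ (KP.basis p)) =
        if p = p' then γ • KP.e p.1 else 0 := by
  obtain ⟨f, i, j⟩ := p
  obtain ⟨γ, hγ0, hρ⟩ := KP.coaction_e_mul_z_pow_mul_u_pow hq f i j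
  refine ⟨γ 0 0, hγ0, fun ⟨f', i', j'⟩ hle => ?_⟩
  have hdeg : (i : ℕ) < i' ∨ (i : ℕ) = i' ∧ (j : ℕ) ≤ j' :=
    (Prod.Lex.toLex_le_toLex.mp hle).imp_right fun h => ⟨congrArg Fin.val h.1, h.2⟩
  have hterm : ∀ t ∈ range ((i : ℕ) + 1), ∀ s ∈ range ((j : ℕ) + 1),
      leftSlice (P.bas.coord (i', j', (f' : GGrp n)))
        (γ t s • ((P.x ^ ((i : ℕ) - t) * P.y ^ ((j : ℕ) - s) *
          P.fG ((f : GGrp n) + ((t : ZMod n), -(s : ZMod n)))) ⊗ₜ[k]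
            (KP.e f * KP.z ^ t * KP.u ^ s))) =
        if t = 0 ∧ s = 0 ∧ (f, i, j) = (f', i', j') then γ 0 0 • KP.e f else 0 := by
    intro t ht s hs
    rw [mem_range_succ_iff] at ht hs
    rw [map_smul, leftSlice_tmul, P.bas_coord_monomial (by omega) (by omega)]
    dsimp only
    by_cases hts : t = 0 ∧ s = 0
    · obtain ⟨rfl, rfl⟩ := hts
      have hiff :
          ((i : ℕ) = i' ∧ (j : ℕ) = j' ∧ (f : GGrp n) = f') ↔ (f, i, j) = (f', i', j') := by
        simp only [Prod.mk.injEq, Fin.ext_iff, Subtype.ext_iff]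
        tauto
      simp only [Nat.sub_zero, Nat.cast_zero, neg_zero, Prod.mk_zero_zero, add_zero, pow_zero,
        mul_one, true_and, hiff]
      split_ifs <;> simp
    · rw [if_neg (fun hc => hts (by omega)), if_neg (fun hc => hts ⟨hc.1, hc.2.1⟩)]
      simp
  rw [basis_apply, hρ, map_sum]
  simp_rw [map_sum]
  rw [sum_congr rfl fun t ht => sum_congr rfl (hterm t ht)]
  simp [ite_and]

lemma leftSlice_coaction_of_bidegree_max (hq : q ≠ 0) {v : A} {p₀ : F × Fin n × Fin n}
    (hp₀ : p₀ ∈ (KP.basis.repr v).support)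
    (hmax : ∀ p ∈ (KP.basis.repr v).support, bidegree p ≤ bidegree p₀) :
    ∃ γ : k, γ ≠ 0 ∧
      leftSlice (P.bas.coord (p₀.2.1, p₀.2.2, p₀.1)) (co.ρ v) = γ • KP.e p₀.1 := by
  obtain ⟨γ, hγ0, hγ⟩ := KP.leftSlice_coaction_basis hq p₀
  refine ⟨KP.basis.repr v p₀ * γ, mul_ne_zero (Finsupp.mem_support_iff.mp hp₀) hγ0, ?_⟩
  conv_lhs => rw [← KP.basis.linearCombination_repr v, Finsupp.linearCombination_apply]
  rw [Finsupp.sum, map_sum, map_sum, sum_eq_single_of_mem p₀ hp₀]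
  · rw [map_smul, map_smul, hγ p₀ le_rfl, if_pos rfl, smul_smul]
  · intro p hp hne
    obtain ⟨γ', -, hγ'⟩ := KP.leftSlice_coaction_basis hq p
    rw [map_smul, map_smul, hγ' p₀ (hmax p hp), if_neg hne, smul_zero]

lemma e_mul_smul_e_neg (f : F) : KP.e f * (((ψ.c f ↑(-f) : kˣ) : k)⁻¹ • KP.e (-f)) = 1 := by
  rw [mul_smul_comm, KP.e_mul, smul_smul, add_neg_cancel, KP.e_zero,
    inv_mul_cancel₀ (Units.ne_zero _), one_smul]

lemma e_ne_zero [NeZero n] (f : F) : KP.e f ≠ 0 := by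
  simpa [basis_apply] using KP.basis.ne_zero (f, 0, 0)

theorem rightHSimple (KP : K11Pres k n q H P a b ξ F ψ co) (hq : q ≠ 0) : co.RightHSimple := by
  intro I hI hcost
  refine or_iff_not_imp_left.mpr fun hI0 => ?_
  obtain ⟨v, hvI, hv0⟩ := (Submodule.ne_bot_iff I).mp hI0
  have hsupp : (KP.basis.repr v).support.Nonempty := by simpa using hv0
  obtain ⟨p₀, hp₀, hmax⟩ := exists_max_image _ bidegree hsupp
  obtain ⟨γ, hγ0, hγ⟩ := KP.leftSlice_coaction_of_bidegree_max hq hp₀ hmax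
  have he : KP.e p₀.1 ∈ I := by
    rw [← I.smul_mem_iff hγ0, ← hγ]
    exact leftSlice_mem_of_mem_range_lTensor _ (hcost v hvI)
  have h1 : (1 : A) ∈ I := KP.e_mul_smul_e_neg p₀.1 ▸ hI _ he _
  exact Submodule.eq_top_iff'.mpr fun x => by simpa using hI 1 h1 x

theorem trivialCoinv [NeZero n] (KP : K11Pres k n q H P a b ξ F ψ co) (hq : q ≠ 0) :
    co.TrivialCoinv := by
  intro v hv
  set c := KP.basis.repr v
  have hmax_eq_zero :
      ∀ p₀ ∈ c.support, (∀ p ∈ c.support, bidegree p ≤ bidegree p₀) → p₀ = 0 := by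
    intro p₀ hp₀ hmax
    by_contra hne
    obtain ⟨γ, hγ0, hγ⟩ := KP.leftSlice_coaction_of_bidegree_max hq hp₀ hmax
    have hidx : ((p₀.2.1, p₀.2.2, (p₀.1 : GGrp n)) : Fin n × Fin n × GGrp n) ≠ 0 := by
      intro h
      exact hne (Prod.ext (Subtype.ext (congrArg (·.2.2) h))
        (Prod.ext (congrArg (·.1) h) (congrArg (·.2.1) h)))
    rw [hv, leftSlice_tmul, P.bas_coord_one, if_neg hidx, zero_smul] at hγ
    exact KP.e_ne_zero _ ((smul_eq_zero.mp hγ.symm).resolve_left hγ0)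
  have hsupp : c.support ⊆ {0} := by
    intro p hp
    obtain ⟨p₀, hp₀, hmax⟩ := exists_max_image _ bidegree ⟨p, hp⟩
    obtain rfl := hmax_eq_zero p₀ hp₀ hmax
    have hdeg : bidegree p = bidegree 0 := le_antisymm (hmax p hp) bot_le
    exact mem_singleton.mpr (hmax_eq_zero p hp fun p' hp' => hdeg ▸ hmax p' hp')
  obtain ⟨t, ht⟩ := Finsupp.support_subset_singleton'.mp hsupp
  have hbasis_zero : KP.basis 0 = 1 := by simp [basis_apply, KP.e_zero]
  refine ⟨t, KP.basis.repr.injective (ht.trans ?_)⟩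
  rw [← hbasis_zero, map_smul, Module.Basis.repr_self, Finsupp.smul_single_one]

end K11Pres

theorem K11Pres_rightHSimple_trivialCoinv_general
    {k : Type*} [Field k]
    {n : ℕ} (hn : 2 ≤ n) {q : k} (hq : IsPrimitiveRoot q n)
    {H : Type*} [Ring H] [HopfAlgebra k H] (P : HPres k n q 1 1 H)
    (a b ξ : k) (F : AddSubgroup (GGrp n))
    (ψ : Cocycle2 (GGrp n) k)
    {A : Type*} [Ring A] [Algebra k A] (co : LeftComodAlg k H A)
    (KP : K11Pres k n q H P a b ξ F ψ co) :
    co.RightHSimple ∧ co.TrivialCoinv := by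
  have : NeZero n := ⟨by omega⟩
  have hq0 : q ≠ 0 := hq.ne_zero (NeZero.ne n)
  exact ⟨KP.rightHSimple hq0, KP.trivialCoinv hq0⟩

/-- For any `a, b, ξ ∈ k` (with `ξ = 0` unless `(g,g⁻¹) ∈ F`), any
subgroup `F ⊆ G` and any 2-cocycle `ψ ∈ Z²(F,k^×)`, the algebra `K₁₁(a,b,ξ,F,ψ)` is a
right `H`-simple left `H`-comodule algebra with trivial coinvariants. -/
theorem K11Pres_rightHSimple_trivialCoinv
    {k : Type*} [Field k] [IsAlgClosed k] [CharZero k]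
    {n : ℕ} (hn : 2 ≤ n) {q : k} (hq : IsPrimitiveRoot q n)
    {H : Type*} [Ring H] [HopfAlgebra k H] (P : HPres k n q 1 1 H)
    (a b ξ : k) (F : AddSubgroup (GGrp n))
    (hξ : ((1 : ZMod n), (-1 : ZMod n)) ∉ F → ξ = 0)
    (ψ : Cocycle2 (GGrp n) k)
    {A : Type*} [Ring A] [Algebra k A] (co : LeftComodAlg k H A)
    (KP : K11Pres k n q H P a b ξ F ψ co) :
    co.RightHSimple ∧ co.TrivialCoinv :=
  K11Pres_rightHSimple_trivialCoinv_general hn hq P a b ξ F ψ co KP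
end
end
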